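/- Let q < p < 0 with q ≤ −2. For every compact set K ⊆ ℝ² containing more than one point, cap_q(K)/cap_p(K) ≤ 2^{1/q − 1/p}, and equality holds when K is a two-point set. Thus the two-point set maximizes the capacity ratio among compact planar sets with more than one point. -/

import Mathlib

open MeasureTheory Metric Set ENNReal Filter

noncomputable section

namespace Riesz

variable {E : Type*} [MeasurableSpace E] [PseudoMetricSpace E]

/-- Borel probability measures supported on `K` (i.e. giving full mass to `K`). -/
def probOn (K : Set E) : Set (Measure E) :=
  {μ | IsProbabilityMeasure μ ∧ μ Kᶜ = 0}

/-- The Riesz `p`-energy `∬ |x-y|^{-p} dμ dμ` of a measure `μ`, valued in `ℝ≥0∞`.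
(The kernel `(dist x y)^{-p}`, computed in `ℝ≥0∞`, is `∞` on the diagonal when `p > 0`
and `0` on the diagonal when `p < 0`.) -/
def energyOf (p : ℝ) (μ : Measure E) : ℝ≥0∞ :=
  ∫⁻ z : E × E, (ENNReal.ofReal (dist z.1 z.2)) ^ (-p) ∂(μ.prod μ)

/-- The Riesz `p`-energy of a set `K`, for `p ≠ 0`: a supremum over probability measures
on `K` when `p < 0`, an infimum when `p > 0`.  (For `K = ∅` this gives `0` when `p < 0`
and `∞` when `p > 0`.) -/
def energy (p : ℝ) (K : Set E) : ℝ≥0∞ :=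
  if p < 0 then ⨆ μ ∈ probOn K, energyOf p μ
  else ⨅ μ ∈ probOn K, energyOf p μ

/-- The logarithmic energy `∬ log (1/|x-y|) dμ dμ` of a measure, as an extended real:
the positive part (with value `∞` on the diagonal) minus the negative part. -/
def logEnergyOf (μ : Measure E) : EReal :=
  ((∫⁻ z : E × E, (if dist z.1 z.2 = 0 then ⊤ else
      ENNReal.ofReal (Real.log (1 / dist z.1 z.2))) ∂(μ.prod μ) : ℝ≥0∞) : EReal)
  - ((∫⁻ z : E × E, ENNReal.ofReal (Real.log (dist z.1 z.2)) ∂(μ.prod μ) : ℝ≥0∞) : EReal)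

/-- The logarithmic energy of a set `K`: infimum over probability measures on `K`. -/
def logEnergy (K : Set E) : EReal :=
  ⨅ μ ∈ probOn K, logEnergyOf μ

/-- The Riesz `p`-capacity of a set: `V_p(K)^{-1/p}` for `p ≠ 0`, and the logarithmic
capacity `exp(-V_log(K))` for `p = 0`. -/
def cap (p : ℝ) (K : Set E) : ℝ :=
  if p = 0 then
    (if logEnergy K = ⊤ then 0 else Real.exp (-(logEnergy K).toReal))
  else ((energy p K).toReal) ^ (-1 / p)

/-- `μ` is a `p`-equilibrium measure of `K`: a probability measure on `K` whose
`p`-energy attains the optimal `p`-energy of `K`. -/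
def IsEquilibrium (p : ℝ) (K : Set E) (μ : Measure E) : Prop :=
  μ ∈ probOn K ∧ energyOf p μ = energy p K

/-- A set `Z` has inner `p`-capacity zero: every compact subset has `p`-capacity zero. -/
def InnerCapZero (p : ℝ) (Z : Set E) : Prop :=
  ∀ Z' ⊆ Z, IsCompact Z' → cap p Z' = 0

end Riesz

end

/-!
Let `d = diam K`, attained at `x, y ∈ K`. The equal-weight measure on `{x, y}` gives
`V_p(K) ≥ d^{-p}/2`, with equality when `K = {x, y}` since `2ab ≤ 1/2` for weights `a + b = 1`.
Pointwise on `K`, `|u - v|^{-q} ≤ d^{p-q} |u - v|^{-p}`, so `V_q(K) ≤ d^{p-q} V_p(K)`. In terms of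
capacities, `cap_q ≤ d^{1-p/q} cap_p^{p/q}` and `cap_p ≥ 2^{1/p} d`, hence
`cap_q / cap_p ≤ (d / cap_p)^{1-p/q} ≤ 2^{1/q-1/p}`.
-/

theorem IsCompact.exists_dist_eq_diam {E : Type*} [PseudoMetricSpace E] {K : Set E}
    (hK : IsCompact K) (hne : K.Nonempty) : ∃ x ∈ K, ∃ y ∈ K, dist x y = diam K := by
  obtain ⟨z, ⟨hz₁, hz₂⟩, hmax⟩ :=
    (hK.prod hK).exists_isMaxOn (hne.prod hne) continuous_dist.continuousOn
  refine ⟨z.1, hz₁, z.2, hz₂, le_antisymm (dist_le_diam_of_mem hK.isBounded hz₁ hz₂) ?_⟩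
  exact diam_le_of_forall_dist_le dist_nonneg fun u hu v hv => hmax (mk_mem_prod hu hv)

theorem ENNReal.two_mul_mul_le_inv_two_of_add_eq_one {a b : ℝ≥0∞} (h : a + b = 1) :
    2 * (a * b) ≤ 2⁻¹ := by
  lift a to NNReal using ne_top_of_le_ne_top one_ne_top (h ▸ le_self_add)
  lift b to NNReal using ne_top_of_le_ne_top one_ne_top (h ▸ le_add_self)
  have hab : 4 * a * b ≤ 1 := by
    simpa [show a + b = 1 by exact_mod_cast h] using four_mul_le_sq_add a b
  rw [ENNReal.le_inv_iff_mul_le]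
  calc 2 * ((a : ℝ≥0∞) * b) * 2 = ((4 * a * b : NNReal) : ℝ≥0∞) := by push_cast; ring
    _ ≤ 1 := by exact_mod_cast hab

theorem Real.inv_two_mul_rpow_rpow {s d : ℝ} (hs : s ≠ 0) (hd : 0 ≤ d) :
    (2⁻¹ * d ^ (-s)) ^ (-1 / s) = 2 ^ (1 / s) * d := by
  rw [Real.mul_rpow (by norm_num) (by positivity), ← Real.rpow_mul hd,
    show -s * (-1 / s) = 1 by field_simp, Real.rpow_one, Real.inv_rpow zero_le_two,
    ← Real.rpow_neg zero_le_two, neg_div, neg_neg]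

theorem ENNReal.toReal_inv_two_mul_ofReal_rpow {s d : ℝ} (hd : 0 ≤ d) :
    (2⁻¹ * ENNReal.ofReal d ^ (-s)).toReal = 2⁻¹ * d ^ (-s) := by
  rw [ENNReal.toReal_mul, ← ENNReal.toReal_rpow, ENNReal.toReal_ofReal hd, ENNReal.toReal_inv,
    ENNReal.toReal_ofNat]

namespace Riesz

section PseudoMetric

variable {E : Type*} [MeasurableSpace E] [PseudoMetricSpace E]

theorem energyOf_zero (μ : Measure E) [IsProbabilityMeasure μ] : energyOf 0 μ = 1 := by
  simp [energyOf]

theorem energyOf_le_rpow_diam_mul {p q : ℝ} (hqp : q ≤ p) (hq : q < 0) {K : Set E}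
    (hK : Bornology.IsBounded K) {μ : Measure E} (hμ : μ ∈ probOn K) :
    energyOf q μ ≤ ENNReal.ofReal (diam K) ^ (p - q) * energyOf p μ := by
  have := hμ.1
  have hKK : ∀ᵐ z ∂μ.prod μ, z ∈ K ×ˢ K := Measure.measure_prod_compl_eq_zero hμ.2 hμ.2
  rw [energyOf, energyOf, ← lintegral_const_mul' _ _
    (ENNReal.rpow_ne_top_of_nonneg (by linarith) ENNReal.ofReal_ne_top)]
  refine lintegral_mono_ae ?_
  filter_upwards [hKK] with z hz
  rcases (dist_nonneg (x := z.1) (y := z.2)).eq_or_lt with h0 | h0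
  · rw [← h0, ENNReal.ofReal_zero, ENNReal.zero_rpow_of_pos (by linarith)]
    exact zero_le
  · rw [show -q = (p - q) + -p by ring,
      ENNReal.rpow_add _ _ (by simpa using h0) ENNReal.ofReal_ne_top]
    gcongr
    exact dist_le_diam_of_mem hK hz.1 hz.2

theorem energy_le_rpow_diam_mul {p q : ℝ} (hqp : q ≤ p) (hq : q < 0) (hp : p < 0)
    {K : Set E} (hK : Bornology.IsBounded K) :
    energy q K ≤ ENNReal.ofReal (diam K) ^ (p - q) * energy p K := by
  rw [energy, if_pos hq, energy, if_pos hp]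
  refine iSup₂_le fun μ hμ => (energyOf_le_rpow_diam_mul hqp hq hK hμ).trans ?_
  gcongr
  exact le_iSup₂ (f := fun ν (_ : ν ∈ probOn K) => energyOf p ν) μ hμ

theorem energy_le_rpow_diam {p : ℝ} (hp : p < 0) {K : Set E} (hK : Bornology.IsBounded K) :
    energy p K ≤ ENNReal.ofReal (diam K) ^ (-p) := by
  rw [energy, if_pos hp]
  refine iSup₂_le fun μ hμ => ?_
  have := hμ.1
  -- the comparison with the exponent `0`, whose kernel is constantly `1`
  simpa [energyOf_zero] using energyOf_le_rpow_diam_mul hp.le hp hK hμ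

theorem energy_ne_top {p : ℝ} (hp : p < 0) {K : Set E} (hK : Bornology.IsBounded K) :
    energy p K ≠ ⊤ :=
  ne_top_of_le_ne_top (ENNReal.rpow_ne_top_of_nonneg (by linarith) ENNReal.ofReal_ne_top)
    (energy_le_rpow_diam hp hK)

end PseudoMetric

section Dirac

variable {E : Type*} [MeasurableSpace E] [MeasurableSingletonClass E]

theorem eq_smul_dirac_add_smul_dirac {x y : E} (hxy : x ≠ y) {μ : Measure E}
    (hμ : μ {x, y}ᶜ = 0) : μ = μ {x} • Measure.dirac x + μ {y} • Measure.dirac y := by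
  have hμ' : ∀ᵐ z ∂μ, z ∈ ({x} ∪ {y} : Set E) := by rwa [singleton_union]
  conv_lhs => rw [← Measure.restrict_eq_self_of_ae_mem hμ',
    Measure.restrict_union (disjoint_singleton.2 hxy) (measurableSet_singleton y)]
  rw [Measure.restrict_singleton, Measure.restrict_singleton]

noncomputable def pairMeasure (x y : E) : Measure E :=
  (2⁻¹ : ℝ≥0∞) • Measure.dirac x + (2⁻¹ : ℝ≥0∞) • Measure.dirac y

theorem pairMeasure_mem_probOn {K : Set E} {x y : E} (hx : x ∈ K) (hy : y ∈ K) :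
    pairMeasure x y ∈ probOn K := by
  refine ⟨⟨?_⟩, ?_⟩
  · simp [pairMeasure, ENNReal.inv_two_add_inv_two]
  · simp [pairMeasure, hx, hy]

variable [PseudoMetricSpace E]

theorem energyOf_smul_dirac_add_smul_dirac {s : ℝ} (hs : s < 0) (a b : ℝ≥0∞) (x y : E) :
    energyOf s (a • Measure.dirac x + b • Measure.dirac y) =
      2 * (a * b) * ENNReal.ofReal (dist x y) ^ (-s) := by
  simp only [energyOf, Measure.prod_add, Measure.add_prod, Measure.prod_smul_left,
    Measure.prod_smul_right, Measure.dirac_prod_dirac, lintegral_add_measure,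
    lintegral_smul_measure, lintegral_dirac, dist_self, ENNReal.ofReal_zero,
    ENNReal.zero_rpow_of_pos (neg_pos.2 hs), dist_comm y x]
  ring

theorem energyOf_pairMeasure {s : ℝ} (hs : s < 0) (x y : E) :
    energyOf s (pairMeasure x y) = 2⁻¹ * ENNReal.ofReal (dist x y) ^ (-s) := by
  rw [pairMeasure, energyOf_smul_dirac_add_smul_dirac hs, ← mul_assoc,
    ENNReal.mul_inv_cancel two_ne_zero ENNReal.ofNat_ne_top, one_mul]

theorem inv_two_mul_rpow_dist_le_energy {s : ℝ} (hs : s < 0) {K : Set E} {x y : E}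
    (hx : x ∈ K) (hy : y ∈ K) : 2⁻¹ * ENNReal.ofReal (dist x y) ^ (-s) ≤ energy s K := by
  rw [energy, if_pos hs, ← energyOf_pairMeasure hs]
  exact le_iSup₂ (f := fun μ (_ : μ ∈ probOn K) => energyOf s μ) _
    (pairMeasure_mem_probOn hx hy)

theorem energy_pair {s : ℝ} (hs : s < 0) {x y : E} (hxy : x ≠ y) :
    energy s {x, y} = 2⁻¹ * ENNReal.ofReal (dist x y) ^ (-s) := by
  refine le_antisymm ?_ (inv_two_mul_rpow_dist_le_energy hs (by simp) (by simp))
  rw [energy, if_pos hs]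
  refine iSup₂_le fun μ hμ => ?_
  have := hμ.1
  have hmass : μ {x} + μ {y} = 1 := by
    rw [← measure_union (disjoint_singleton.2 hxy) (measurableSet_singleton y), singleton_union,
      ← prob_compl_eq_zero_iff ((measurableSet_singleton y).insert x)]
    exact hμ.2
  rw [eq_smul_dirac_add_smul_dirac hxy hμ.2, energyOf_smul_dirac_add_smul_dirac hs]
  gcongr
  exact ENNReal.two_mul_mul_le_inv_two_of_add_eq_one hmass

end Dirac

section Capacity

variable {E : Type*} [MeasurableSpace E] [PseudoMetricSpace E]

theorem cap_le_rpow_diam_mul {p q : ℝ} (hqp : q < p) (hp : p < 0) {K : Set E}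
    (hK : Bornology.IsBounded K) : cap q K ≤ diam K ^ (1 - p / q) * cap p K ^ (p / q) := by
  have hq : q < 0 := hqp.trans hp
  have hV : (energy q K).toReal ≤ diam K ^ (p - q) * (energy p K).toReal := by
    have := ENNReal.toReal_mono
      (ENNReal.mul_ne_top (ENNReal.rpow_ne_top_of_nonneg (by linarith) ENNReal.ofReal_ne_top)
        (energy_ne_top hp hK))
      (energy_le_rpow_diam_mul hqp.le hq hp hK)
    rwa [ENNReal.toReal_mul, ← ENNReal.toReal_rpow, ENNReal.toReal_ofReal diam_nonneg] at this
  rw [cap, if_neg hq.ne, cap, if_neg hp.ne]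
  calc (energy q K).toReal ^ (-1 / q)
      ≤ (diam K ^ (p - q) * (energy p K).toReal) ^ (-1 / q) :=
        Real.rpow_le_rpow ENNReal.toReal_nonneg hV (div_pos_of_neg_of_neg (by norm_num) hq).le
    _ = diam K ^ (1 - p / q) * ((energy p K).toReal ^ (-1 / p)) ^ (p / q) := by
        have e₁ : (p - q) * (-1 / q) = 1 - p / q := by field_simp [hq.ne]; ring
        have e₂ : -1 / p * (p / q) = -1 / q := by field_simp [hp.ne]
        rw [Real.mul_rpow (by positivity) ENNReal.toReal_nonneg, ← Real.rpow_mul diam_nonneg,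
          ← Real.rpow_mul ENNReal.toReal_nonneg, e₁, e₂]

variable [MeasurableSingletonClass E]

theorem two_rpow_inv_mul_dist_le_cap {s : ℝ} (hs : s < 0) {K : Set E}
    (hK : Bornology.IsBounded K) {x y : E} (hx : x ∈ K) (hy : y ∈ K) :
    2 ^ (1 / s) * dist x y ≤ cap s K := by
  rw [← Real.inv_two_mul_rpow_rpow hs.ne dist_nonneg, cap, if_neg hs.ne,
    ← ENNReal.toReal_inv_two_mul_ofReal_rpow dist_nonneg]
  exact Real.rpow_le_rpow ENNReal.toReal_nonneg
    (ENNReal.toReal_mono (energy_ne_top hs hK) (inv_two_mul_rpow_dist_le_energy hs hx hy))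
    (div_pos_of_neg_of_neg (by norm_num) hs).le

theorem cap_pair {s : ℝ} (hs : s < 0) {x y : E} (hxy : x ≠ y) :
    cap s {x, y} = 2 ^ (1 / s) * dist x y := by
  rw [cap, if_neg hs.ne, energy_pair hs hxy, ENNReal.toReal_inv_two_mul_ofReal_rpow dist_nonneg,
    Real.inv_two_mul_rpow_rpow hs.ne dist_nonneg]

end Capacity

section MetricCapacity

variable {E : Type*} [MeasurableSpace E] [MetricSpace E] [MeasurableSingletonClass E]

theorem cap_div_cap_le {p q : ℝ} (hqp : q < p) (hp : p < 0) {K : Set E} (hK : IsCompact K)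
    (hK2 : K.Nontrivial) : cap q K / cap p K ≤ 2 ^ (1 / q - 1 / p) := by
  have hq : q < 0 := hqp.trans hp
  obtain ⟨x, hx, y, hy, hxy⟩ := hK.exists_dist_eq_diam hK2.nonempty
  have hd : 0 < diam K := diam_pos hK2 hK.isBounded
  have hc : 2 ^ (1 / p) * diam K ≤ cap p K :=
    hxy ▸ two_rpow_inv_mul_dist_le_cap hp hK.isBounded hx hy
  have hcpos : 0 < cap p K := lt_of_lt_of_le (by positivity) hc
  have he : 0 ≤ 1 - p / q := by
    rw [sub_nonneg, div_le_one_of_neg hq]; exact hqp.le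
  calc cap q K / cap p K
      ≤ diam K ^ (1 - p / q) * cap p K ^ (p / q) / cap p K := by
        gcongr; exact cap_le_rpow_diam_mul hqp hp hK.isBounded
    _ = (diam K / cap p K) ^ (1 - p / q) := by
        rw [Real.div_rpow hd.le hcpos.le, Real.rpow_sub hcpos, Real.rpow_one]
        field_simp
    _ ≤ (2 ^ (-1 / p)) ^ (1 - p / q) := by
        gcongr
        rw [div_le_iff₀ hcpos, neg_div, Real.rpow_neg zero_le_two,
          le_inv_mul_iff₀ (by positivity)]
        exact hc
    _ = 2 ^ (1 / q - 1 / p) := by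
        rw [← Real.rpow_mul zero_le_two]
        congr 1
        field_simp [hp.ne, hq.ne]
        ring

theorem cap_div_cap_pair {p q : ℝ} (hp : p < 0) (hq : q < 0) {x y : E} (hxy : x ≠ y) :
    cap q {x, y} / cap p {x, y} = 2 ^ (1 / q - 1 / p) := by
  rw [cap_pair hq hxy, cap_pair hp hxy, mul_div_mul_right _ _ (dist_pos.2 hxy).ne',
    Real.rpow_sub two_pos]

end MetricCapacity

end Riesz

theorem statement9_general (p q : ℝ) (hqp : q < p) (hp : p < 0)
    (K : Set (EuclideanSpace ℝ (Fin 2))) (hK : IsCompact K) (hK2 : K.Nontrivial) :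
    Riesz.cap q K / Riesz.cap p K ≤ (2 : ℝ) ^ (1 / q - 1 / p) ∧
    ∀ x y : EuclideanSpace ℝ (Fin 2), x ≠ y →
      Riesz.cap q ({x, y} : Set (EuclideanSpace ℝ (Fin 2))) /
        Riesz.cap p ({x, y} : Set (EuclideanSpace ℝ (Fin 2))) =
        (2 : ℝ) ^ (1 / q - 1 / p) :=
  ⟨Riesz.cap_div_cap_le hqp hp hK hK2, fun _ _ => Riesz.cap_div_cap_pair hp (hqp.trans hp)⟩

/-- For `q < p < 0` with `q ≤ -2`, among compact planar sets with more than one point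
the two-point set maximizes `cap_q/cap_p`, with maximal value `2^(1/q-1/p)`. -/
theorem statement9 (p q : ℝ) (hqp : q < p) (hp : p < 0) (hq : q ≤ -2)
    (K : Set (EuclideanSpace ℝ (Fin 2))) (hK : IsCompact K) (hK2 : K.Nontrivial) :
    Riesz.cap q K / Riesz.cap p K ≤ (2 : ℝ) ^ (1 / q - 1 / p) ∧
    ∀ x y : EuclideanSpace ℝ (Fin 2), x ≠ y →
      Riesz.cap q ({x, y} : Set (EuclideanSpace ℝ (Fin 2))) /
        Riesz.cap p ({x, y} : Set (EuclideanSpace ℝ (Fin 2))) =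
        (2 : ℝ) ^ (1 / q - 1 / p) :=
  statement9_general p q hqp hp K hK hK2
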